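/- For any graph G, φ(G) ≥ (χ(H) - ω(H))/2 for every induced subgraph H of G; in particular φ(G) ≥ (χ(G) - ω(G))/2. -/

import Mathlib

open SimpleGraph

noncomputable def chi {W : Type*} (G : SimpleGraph W) : ℕ := G.chromaticNumber.toNat

def IsProper {W : Type*} (G : SimpleGraph W) (c : W → ℕ) : Prop :=
  ∀ ⦃u v⦄, G.Adj u v → c u ≠ c v

noncomputable def disc {W : Type*} (G : SimpleGraph W) (c : W → ℕ) (s : Finset W) : ℕ :=
  (s.image c).card - chi (G.induce (s : Set W))

noncomputable def phiC {W : Type*} [Fintype W] (G : SimpleGraph W) (c : W → ℕ) : ℕ :=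
  Finset.univ.sup (disc G c)

noncomputable def phi {W : Type*} [Fintype W] (G : SimpleGraph W) : ℕ :=
  sInf {n | ∃ c, IsProper G c ∧ phiC G c = n}

open Classical in
noncomputable def phiHatC {W : Type*} [Fintype W] (G : SimpleGraph W) (c : W → ℕ) : ℕ :=
  Finset.univ.sup (fun s : Finset W =>
    if (G.induce (s : Set W)).Connected then disc G c s else 0)

noncomputable def phiHat {W : Type*} [Fintype W] (G : SimpleGraph W) : ℕ :=
  sInf {n | ∃ c, IsProper G c ∧ phiHatC G c = n}

open Classical in
noncomputable def indepNum' {W : Type*} [Fintype W] (G : SimpleGraph W) : ℕ :=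
  Finset.univ.sup fun s : Finset W =>
    if ∀ u ∈ s, ∀ v ∈ s, ¬ G.Adj u v then s.card else 0

open Classical in
noncomputable def cliqueNum' {W : Type*} [Fintype W] (G : SimpleGraph W) : ℕ :=
  Finset.univ.sup fun s : Finset W =>
    if G.IsClique (s : Set W) then s.card else 0

/-! Fix a proper colouring `c` attaining `φ(G)`. Inside any vertex set `s` pick a rainbow
transversal `t ⊆ s`, one vertex of each colour that `c` uses on `s`. On `t` all colours are
distinct, so `|t| - χ(G[t]) ≤ φ(G)`; together with
`2 χ(G[t]) ≤ |t| + ω(G[t]) ≤ |t| + ω(G[s])` this gives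
`χ(G[s]) ≤ |c(s)| = |t| ≤ ω(G[s]) + 2 φ(G)`.

The bound `2 χ ≤ n + ω` holds by induction on `n`: a complete graph has `χ = n = ω`, and
otherwise two non-adjacent vertices can share one new colour on top of an optimal colouring of
the rest. -/

namespace SimpleGraph

variable {W : Type*} {H : SimpleGraph W}

lemma chi_le_of_colorable {n : ℕ} (h : H.Colorable n) : chi H ≤ n :=
  ENat.toNat_le_of_le_natCast h.chromaticNumber_le

lemma colorable_chi [Finite W] (H : SimpleGraph W) : H.Colorable (chi H) :=
  H.colorable_chromaticNumber_of_fintype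

lemma chi_le_card [Fintype W] (H : SimpleGraph W) : chi H ≤ Fintype.card W :=
  chi_le_of_colorable H.colorable_of_fintype

lemma chi_le_chi_induce_compl_add_one [Finite W] {A : Set W} (hA : H.IsIndepSet A) :
    chi H ≤ chi (H.induce Aᶜ) + 1 := by
  classical
  obtain ⟨C⟩ := colorable_chi (H.induce Aᶜ)
  let D : H.Coloring (Option (Fin (chi (H.induce Aᶜ)))) :=
    Coloring.mk (fun x => if hx : x ∈ Aᶜ then some (C ⟨x, hx⟩) else none) <| by
      intro x y hxy
      by_cases hx : x ∈ Aᶜ <;> by_cases hy : y ∈ Aᶜ <;>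
        simp only [hx, hy, dite_true, dite_false]
      · exact fun h => C.valid (v := ⟨x, hx⟩) (w := ⟨y, hy⟩) hxy (Option.some_inj.1 h)
      · simp
      · simp
      · exact absurd hxy (hA (not_not.1 hx) (not_not.1 hy) (H.ne_of_adj hxy))
  simpa using chi_le_of_colorable D.colorable

lemma Embedding.cliqueNum_le {W' : Type*} [Finite W'] {H' : SimpleGraph W'} (f : H ↪g H') :
    H.cliqueNum ≤ H'.cliqueNum := by
  obtain ⟨K, hK⟩ := H.exists_isNClique_cliqueNum
  have hfK : H'.IsClique (K.map f.toEmbedding : Set W') := by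
    intro x hx y hy hxy
    simp only [Finset.coe_map, Set.mem_image, Finset.mem_coe] at hx hy
    obtain ⟨a, ha, rfl⟩ := hx
    obtain ⟨b, hb, rfl⟩ := hy
    exact f.map_adj_iff.2 (hK.isClique ha hb (fun h => hxy (h ▸ rfl)))
  simpa [hK.card_eq] using hfK.card_le_cliqueNum

lemma cliqueNum_induce_mono [Finite W] (H : SimpleGraph W) {s t : Set W} (h : s ≤ t) :
    (H.induce s).cliqueNum ≤ (H.induce t).cliqueNum :=
  Embedding.cliqueNum_le (H.induceHomOfLE h)

lemma two_mul_chi_le_card_add_cliqueNum [Fintype W] (H : SimpleGraph W) :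
    2 * chi H ≤ Fintype.card W + H.cliqueNum := by
  classical
  induction hn : Fintype.card W using Nat.strong_induction_on generalizing W with
  | _ n ih =>
  by_cases hclique : H.IsClique (Set.univ : Set W)
  · have : Fintype.card W ≤ H.cliqueNum :=
      IsClique.card_le_cliqueNum (t := Finset.univ) (tc := by simpa using hclique)
    have := chi_le_card H
    omega
  · obtain ⟨u, v, huv, hnadj⟩ : ∃ u v, u ≠ v ∧ ¬ H.Adj u v := by
      simpa [IsClique, Set.Pairwise] using hclique
    have hA : H.IsIndepSet {u, v} :=
      Set.pairwise_pair.2 fun _ => ⟨hnadj, fun h => hnadj h.symm⟩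
    have hcard : Fintype.card ↥({u, v} : Set W)ᶜ + 2 = n := by
      have h2 : Fintype.card ↥({u, v} : Set W) = 2 := by simp [huv]
      have := set_fintype_card_le_univ ({u, v} : Set W)
      rw [Fintype.card_compl_set, h2]
      omega
    have := ih _ (by omega) (H.induce ({u, v} : Set W)ᶜ) rfl
    have := chi_le_chi_induce_compl_add_one hA
    have := H.cliqueNum_induce_le ({u, v} : Set W)ᶜ
    omega

end SimpleGraph

open Finset

lemma cliqueNum'_eq_cliqueNum {W : Type*} [Fintype W] (H : SimpleGraph W) :
    cliqueNum' H = H.cliqueNum := by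
  classical
  unfold cliqueNum'
  refine le_antisymm (Finset.sup_le fun K _ => ?_) ?_
  · split_ifs with hK
    · exact hK.card_le_cliqueNum
    · exact Nat.zero_le _
  · obtain ⟨K, hK⟩ := H.exists_isNClique_cliqueNum
    rw [← hK.card_eq]
    convert Finset.le_sup (f := fun K : Finset W => if H.IsClique (K : Set W) then #K else 0)
      (mem_univ K)
    simp [hK.isClique]

lemma IsProper.chi_le_card {W : Type*} {H : SimpleGraph W} {c : W → ℕ} (hc : IsProper H c)
    {S : Finset ℕ} (hS : ∀ v, c v ∈ S) : chi H ≤ #S := by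
  let C : H.Coloring S := Coloring.mk (fun v => ⟨c v, hS v⟩) fun h => by simpa using hc h
  simpa using chi_le_of_colorable C.colorable

lemma IsProper.chi_induce_le_card_image {V : Type*} {G : SimpleGraph V} {c : V → ℕ}
    (hc : IsProper G c) (s : Finset V) :
    chi (G.induce s) ≤ #(s.image c) := by
  have hc' : IsProper (G.induce s) (fun v => c v) := fun _ _ h => hc h
  exact hc'.chi_le_card fun v => mem_image_of_mem c v.2

section

variable {V : Type*} [Fintype V] (G : SimpleGraph V)

lemma card_image_le_cliqueNum_add_two_mul_phiC (c : V → ℕ) (s : Finset V) :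
    #(s.image c) ≤ (G.induce s).cliqueNum + 2 * phiC G c := by
  obtain ⟨t, hts, hinj, himage⟩ := exists_subset_injOn_image_eq_of_surjOn (f := c) (s : Set V)
    (s.image c) (by simp [Set.SurjOn])
  have hcard : #t = #(s.image c) := himage ▸ (card_image_of_injOn hinj).symm
  have hdisc : disc G c t ≤ phiC G c := le_sup (mem_univ t)
  have hchi := two_mul_chi_le_card_add_cliqueNum (G.induce t)
  have hmono := G.cliqueNum_induce_mono hts
  simp only [disc, himage] at hdisc
  simp only [coe_sort_coe, Fintype.card_coe] at hchi
  omega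

lemma exists_isProper_phiC_eq_phi : ∃ c, IsProper G c ∧ phiC G c = phi G := by
  let c : V → ℕ := fun v => Fintype.equivFin V v
  have hc : IsProper G c := fun _ _ h hcuv =>
    G.ne_of_adj h ((Fintype.equivFin V).injective (Fin.val_injective hcuv))
  exact Nat.sInf_mem (s := {n | ∃ c, IsProper G c ∧ phiC G c = n}) ⟨_, c, hc, rfl⟩

lemma chi_induce_le_cliqueNum_add_two_mul_phi (s : Finset V) :
    chi (G.induce s) ≤ (G.induce s).cliqueNum + 2 * phi G := by
  obtain ⟨c, hc, hphi⟩ := exists_isProper_phiC_eq_phi G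
  exact hphi ▸
    (hc.chi_induce_le_card_image s).trans (card_image_le_cliqueNum_add_two_mul_phiC G c s)

lemma chi_le_cliqueNum_add_two_mul_phi : chi G ≤ G.cliqueNum + 2 * phi G := by
  obtain ⟨c, hc, hphi⟩ := exists_isProper_phiC_eq_phi G
  calc chi G ≤ #(univ.image c) := hc.chi_le_card fun v => mem_image_of_mem c (mem_univ v)
    _ ≤ (G.induce (univ : Finset V)).cliqueNum + 2 * phi G :=
      hphi ▸ card_image_le_cliqueNum_add_two_mul_phiC G c univ
    _ ≤ G.cliqueNum + 2 * phi G := by gcongr; exact G.cliqueNum_induce_le _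

end

theorem stmt8 {V : Type*} [Fintype V] (G : SimpleGraph V) :
    (∀ s : Finset V,
      ((chi (G.induce (s : Set V)) : ℝ) - (cliqueNum' (G.induce (s : Set V)) : ℝ)) / 2
        ≤ (phi G : ℝ)) ∧
    ((chi G : ℝ) - (cliqueNum' G : ℝ)) / 2 ≤ (phi G : ℝ) := by
  have half {a b : ℕ} (h : a ≤ b + 2 * phi G) : ((a : ℝ) - b) / 2 ≤ phi G := by
    have h' : (a : ℝ) ≤ b + 2 * phi G := by exact_mod_cast h
    linarith
  refine ⟨fun s => half ?_, half ?_⟩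
  · simpa only [cliqueNum'_eq_cliqueNum] using chi_induce_le_cliqueNum_add_two_mul_phi G s
  · simpa only [cliqueNum'_eq_cliqueNum] using chi_le_cliqueNum_add_two_mul_phi G
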